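/- arXiv:1508.02023 — 2 statements merged into one kernel-verified Lean document; each statement's English description precedes it below -/
import Mathlib

section
/- Let N ≥ 0 be an integer, s ≥ 0 a real number, 1 ≤ p < ∞, and suppose u₀ ∈ Ḃ^N_{p,1}(ℝ³) ∩ Ḃ^{−s}_{p,1}(ℝ³). If u solves the heat equation ∂_t u = Δu with u(0) = u₀, and the dyadic blocks satisfy (d/dt)‖Δ_j u‖_{L^p} + κ 2^{2j}‖Δ_j u‖_{L^p} ≤ 0 for some κ > 0, then for every real ℓ ∈ [−s, N] there is a constant C₀ such that ‖u(t)‖_{Ḃ^ℓ_{p,1}} ≤ C₀ (1+t)^{−(ℓ+s)/2} for all t ≥ 0. -/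
open ENNReal

set_option linter.unusedVariables false in
lemma gronwall_decay (k : ℝ) (c : ℝ → ℝ) (hdiff : Differentiable ℝ c)
    (hode : ∀ t, 0 ≤ t → deriv c t + k * c t ≤ 0) :
    ∀ t, 0 ≤ t → c t ≤ c 0 * Real.exp (-(k * t)) := by
  intro t ht
  set g : ℝ → ℝ := fun t => c t * Real.exp (k * t) with hg
  have hder : ∀ x, HasDerivAt g ((deriv c x + k * c x) * Real.exp (k * x)) x := by
    intro x
    have h1 : HasDerivAt c (deriv c x) x := (hdiff x).hasDerivAt
    have h2 : HasDerivAt (fun t : ℝ => Real.exp (k * t)) (k * Real.exp (k * x)) x := by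
      have := (Real.hasDerivAt_exp (k * x)).comp x ((hasDerivAt_id x).const_mul k)
      exact this.congr_deriv (by ring)
    have := h1.mul h2
    exact this.congr_deriv (by ring)
  have hmono : AntitoneOn g (Set.Ici 0) := by
    apply antitoneOn_of_deriv_nonpos (convex_Ici 0)
    · exact fun x _ => ((hder x).continuousAt).continuousWithinAt
    · intro x _
      exact (hder x).differentiableAt.differentiableWithinAt
    · intro x hx
      rw [(hder x).deriv]
      rw [interior_Ici] at hx
      have h := hode x (le_of_lt hx)
      nlinarith [Real.exp_pos (k * x)]
  have hle : g t ≤ g 0 := hmono Set.self_mem_Ici (Set.mem_Ici.mpr ht) ht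
  have hg0 : g 0 = c 0 := by simp [hg]
  have hle' : c t * Real.exp (k * t) ≤ c 0 := hg0 ▸ hle
  calc c t = (c t * Real.exp (k * t)) * Real.exp (-(k * t)) := by
        rw [mul_assoc, ← Real.exp_add]; simp
    _ ≤ c 0 * Real.exp (-(k * t)) :=
        mul_le_mul_of_nonneg_right hle' (Real.exp_pos _).le

lemma aux_rpow_exp (α : ℝ) (hα : 0 ≤ α) (x : ℝ) (hx : 0 ≤ x) :
    x ^ α * Real.exp (-x) ≤ ((⌈α⌉₊ : ℝ) ^ (⌈α⌉₊ : ℕ) + 1) := by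
  set n := ⌈α⌉₊ with hn
  have hM : (0:ℝ) ≤ (n:ℝ) ^ n := by positivity
  rcases le_or_gt x 1 with h1 | h1
  · have h2 : x ^ α ≤ 1 := Real.rpow_le_one hx h1 hα
    have h3 : Real.exp (-x) ≤ 1 := Real.exp_le_one_iff.mpr (by linarith)
    nlinarith [Real.exp_pos (-x), Real.rpow_nonneg hx α]
  · have hxn : x ^ α ≤ x ^ (n : ℕ) := by
      rw [← Real.rpow_natCast x n]
      exact Real.rpow_le_rpow_of_exponent_le h1.le (Nat.le_ceil α)
    have key : x ^ (n : ℕ) ≤ (n:ℝ) ^ n * Real.exp x := by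
      rcases Nat.eq_zero_or_pos n with h0 | h0
      · have hex : (1:ℝ) ≤ Real.exp x := Real.one_le_exp (by linarith)
        simp only [h0, pow_zero, Nat.cast_zero, one_mul]
        linarith
      · have hnp : (0:ℝ) < n := by exact_mod_cast h0
        have h4 : x / n ≤ Real.exp (x / n) := by
          have h5 := Real.add_one_le_exp (x / n - 1)
          have h6 : Real.exp (x / n - 1) ≤ Real.exp (x / n) :=
            Real.exp_le_exp.mpr (by linarith)
          linarith
        have h5 : x ≤ (n:ℝ) * Real.exp (x / n) := by
          rw [div_le_iff₀ hnp] at h4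
          nlinarith [Real.exp_pos (x / n)]
        calc x ^ (n:ℕ) ≤ ((n:ℝ) * Real.exp (x / n)) ^ (n:ℕ) :=
              pow_le_pow_left₀ hx h5 n
          _ = (n:ℝ) ^ n * Real.exp (x / n) ^ (n:ℕ) := mul_pow _ _ _
          _ = (n:ℝ) ^ n * Real.exp x := by
              rw [← Real.exp_nat_mul]
              congr 2
              field_simp
    have h6 : x ^ α * Real.exp (-x) ≤ ((n:ℝ) ^ n * Real.exp x) * Real.exp (-x) :=
      mul_le_mul_of_nonneg_right (hxn.trans key) (Real.exp_pos (-x)).le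
    have h7 : ((n:ℝ) ^ n * Real.exp x) * Real.exp (-x) = (n:ℝ) ^ n := by
      rw [mul_assoc, ← Real.exp_add]; simp
    linarith


/-- Theorem 1.2 of the paper, stated blockwise: if the Littlewood–Paley blocks of a
solution of the heat equation satisfy the dissipative differential inequality, and
the data lies in `Ḃ^N_{p,1} ∩ Ḃ^{-s}_{p,1}`, then for every `ℓ ∈ [-s, N]` the
`Ḃ^ℓ_{p,1}` norm decays like `(1+t)^{-(ℓ+s)/2}`. -/
theorem stmt5 (N : ℕ) (s : ℝ) (hs : 0 ≤ s) (p : ℝ) (hp : 1 ≤ p)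
    (κ : ℝ) (hκ : 0 < κ)
    (c : ℤ → ℝ → ℝ)
    (hdiff : ∀ j, Differentiable ℝ (c j))
    (hnn : ∀ j t, 0 ≤ t → 0 ≤ c j t)
    (hode : ∀ j t, 0 ≤ t →
      deriv (c j) t + κ * (2 : ℝ) ^ (2 * (j : ℝ)) * c j t ≤ 0)
    (hdata₁ : (∑' j : ℤ, ENNReal.ofReal ((2 : ℝ) ^ ((j : ℝ) * (-s)) * c j 0)) < ⊤)
    (hdata₂ : (∑' j : ℤ, ENNReal.ofReal ((2 : ℝ) ^ ((j : ℝ) * (N : ℝ)) * c j 0)) < ⊤) :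
    ∀ ℓ : ℝ, -s ≤ ℓ → ℓ ≤ (N : ℝ) →
      ∃ C₀ : ℝ, ∀ t, 0 ≤ t →
        (∑' j : ℤ, ENNReal.ofReal ((2 : ℝ) ^ ((j : ℝ) * ℓ) * c j t)) ≤
          ENNReal.ofReal (C₀ * (1 + t) ^ (-(ℓ + s) / 2)) := by
  intro ℓ hℓ₁ hℓ₂
  set α := (ℓ + s) / 2 with hαdef
  have hα : 0 ≤ α := by rw [hαdef]; linarith
  set M : ℝ := (⌈α⌉₊ : ℝ) ^ (⌈α⌉₊ : ℕ) + 1 with hMdef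
  have hM0 : 0 < M := by positivity
  set S₁ := ∑' j : ℤ, ENNReal.ofReal ((2 : ℝ) ^ ((j : ℝ) * (-s)) * c j 0) with hS₁
  set S₂ := ∑' j : ℤ, ENNReal.ofReal ((2 : ℝ) ^ ((j : ℝ) * (N : ℝ)) * c j 0) with hS₂
  have hS₁top : S₁ ≠ ⊤ := hdata₁.ne
  have hS₂top : S₂ ≠ ⊤ := hdata₂.ne
  set A := S₁.toReal with hAdef
  set B := S₂.toReal with hBdef
  have hA : 0 ≤ A := ENNReal.toReal_nonneg
  have hB : 0 ≤ B := ENNReal.toReal_nonneg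
  have hexp : ∀ j t, 0 ≤ t →
      c j t ≤ c j 0 * Real.exp (-(κ * (2 : ℝ) ^ (2 * (j : ℝ)) * t)) := by
    intro j
    exact gronwall_decay (κ * (2 : ℝ) ^ (2 * (j : ℝ))) (c j) (hdiff j)
      (fun t ht => hode j t ht)
  have hexpeq : -(ℓ + s) / 2 = -α := by rw [hαdef]; ring
  refine ⟨max ((A * (M * κ ^ (-α))) * 2 ^ α) ((A + B) * 2 ^ α), ?_⟩
  intro t ht
  have h1t : (0:ℝ) < 1 + t := by linarith
  rw [hexpeq]
  have hCnn : (0:ℝ) ≤ max ((A * (M * κ ^ (-α))) * 2 ^ α) ((A + B) * 2 ^ α) := by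
    have : (0:ℝ) ≤ (A + B) * 2 ^ α := by positivity
    exact this.trans (le_max_right _ _)
  rcases le_or_gt t 1 with htle | htgt
  · -- small time: use boundedness
    have hterm : ∀ j : ℤ, ENNReal.ofReal ((2 : ℝ) ^ ((j : ℝ) * ℓ) * c j t) ≤
        ENNReal.ofReal ((2 : ℝ) ^ ((j : ℝ) * (-s)) * c j 0) +
        ENNReal.ofReal ((2 : ℝ) ^ ((j : ℝ) * (N : ℝ)) * c j 0) := by
      intro j
      have hc0 := hnn j 0 le_rfl
      have hct := hnn j t ht
      have hc : c j t ≤ c j 0 := by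
        have h := hexp j t ht
        have hx0 : (0:ℝ) ≤ κ * (2 : ℝ) ^ (2 * (j : ℝ)) * t := by positivity
        have he : Real.exp (-(κ * (2 : ℝ) ^ (2 * (j : ℝ)) * t)) ≤ 1 :=
          Real.exp_le_one_iff.mpr (by linarith)
        nlinarith
      have hpow : (2:ℝ) ^ ((j : ℝ) * ℓ) ≤
          (2:ℝ) ^ ((j : ℝ) * (-s)) + (2:ℝ) ^ ((j : ℝ) * (N : ℝ)) := by
        rcases le_or_gt 0 (j:ℝ) with hj | hj
        · have h1 : (j:ℝ) * ℓ ≤ (j:ℝ) * N := mul_le_mul_of_nonneg_left hℓ₂ hj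
          have h2 := Real.rpow_le_rpow_of_exponent_le one_le_two h1
          have h3 : (0:ℝ) ≤ (2:ℝ) ^ ((j : ℝ) * (-s)) := Real.rpow_nonneg (by norm_num) _
          linarith
        · have h1 : (j:ℝ) * ℓ ≤ (j:ℝ) * (-s) := by nlinarith
          have h2 := Real.rpow_le_rpow_of_exponent_le one_le_two h1
          have h3 : (0:ℝ) ≤ (2:ℝ) ^ ((j : ℝ) * (N:ℝ)) := Real.rpow_nonneg (by norm_num) _
          linarith
      have h1 : (2:ℝ) ^ ((j : ℝ) * ℓ) * c j t ≤
          (2:ℝ) ^ ((j : ℝ) * (-s)) * c j 0 + (2:ℝ) ^ ((j : ℝ) * (N:ℝ)) * c j 0 := by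
        nlinarith [Real.rpow_nonneg (by norm_num : (0:ℝ) ≤ 2) ((j:ℝ) * ℓ)]
      calc ENNReal.ofReal ((2 : ℝ) ^ ((j : ℝ) * ℓ) * c j t)
          ≤ ENNReal.ofReal ((2:ℝ) ^ ((j : ℝ) * (-s)) * c j 0 +
              (2:ℝ) ^ ((j : ℝ) * (N:ℝ)) * c j 0) := ENNReal.ofReal_le_ofReal h1
        _ = _ := ENNReal.ofReal_add (by positivity) (by positivity)
    have hsum : (∑' j : ℤ, ENNReal.ofReal ((2 : ℝ) ^ ((j : ℝ) * ℓ) * c j t)) ≤ S₁ + S₂ := by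
      calc _ ≤ ∑' j : ℤ, (ENNReal.ofReal ((2 : ℝ) ^ ((j : ℝ) * (-s)) * c j 0) +
              ENNReal.ofReal ((2 : ℝ) ^ ((j : ℝ) * (N : ℝ)) * c j 0)) :=
            ENNReal.tsum_le_tsum hterm
        _ = S₁ + S₂ := ENNReal.tsum_add
    have hSAB : S₁ + S₂ = ENNReal.ofReal (A + B) := by
      rw [ENNReal.ofReal_add hA hB, hAdef, hBdef,
        ENNReal.ofReal_toReal hS₁top, ENNReal.ofReal_toReal hS₂top]
    refine hsum.trans ?_
    rw [hSAB]
    apply ENNReal.ofReal_le_ofReal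
    have h2α : (2:ℝ) ^ α * (2:ℝ) ^ (-α) = 1 := by
      rw [← Real.rpow_add two_pos]; simp
    have hbase : (2:ℝ) ^ (-α) ≤ (1 + t) ^ (-α) := by
      rw [Real.rpow_neg (by norm_num : (0:ℝ) ≤ 2), Real.rpow_neg h1t.le]
      have hp1 : (0:ℝ) < (1 + t) ^ α := Real.rpow_pos_of_pos h1t _
      have hp2 : (0:ℝ) < (2:ℝ) ^ α := Real.rpow_pos_of_pos two_pos _
      have hup : (1 + t) ^ α ≤ (2:ℝ) ^ α :=
        Real.rpow_le_rpow h1t.le (by linarith) hα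
      exact inv_anti₀ hp1 hup
    have hmax : (A + B) * 2 ^ α ≤ max ((A * (M * κ ^ (-α))) * 2 ^ α) ((A + B) * 2 ^ α) :=
      le_max_right _ _
    calc A + B = ((A + B) * 2 ^ α) * 2 ^ (-α) := by
          rw [mul_assoc, h2α, mul_one]
      _ ≤ max ((A * (M * κ ^ (-α))) * 2 ^ α) ((A + B) * 2 ^ α) * (1 + t) ^ (-α) := by
          apply mul_le_mul hmax hbase (Real.rpow_nonneg (by norm_num) _) hCnn
  · -- large time
    have htpos : (0:ℝ) < t := by linarith
    have hterm : ∀ j : ℤ, (2 : ℝ) ^ ((j : ℝ) * ℓ) * c j t ≤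
        ((2 : ℝ) ^ ((j : ℝ) * (-s)) * c j 0) * (M * κ ^ (-α) * t ^ (-α)) := by
      intro j
      have hb : (0:ℝ) < (2:ℝ) ^ (2 * (j:ℝ)) := Real.rpow_pos_of_pos two_pos _
      set x := κ * (2:ℝ) ^ (2 * (j:ℝ)) * t with hxdef
      have hx0 : 0 < x := by positivity
      have hE : x ^ α * Real.exp (-x) ≤ M := aux_rpow_exp α hα x hx0.le
      have hxα : x ^ α = κ ^ α * (2:ℝ) ^ ((j:ℝ) * (ℓ + s)) * t ^ α := by
        rw [hxdef, Real.mul_rpow (by positivity) htpos.le,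
          Real.mul_rpow hκ.le hb.le,
          ← Real.rpow_mul (by norm_num : (0:ℝ) ≤ 2)]
        congr 2
        rw [hαdef]; ring
      have hsplit : (2:ℝ) ^ ((j:ℝ) * ℓ) =
          (2:ℝ) ^ ((j:ℝ) * (-s)) * (2:ℝ) ^ ((j:ℝ) * (ℓ + s)) := by
        rw [← Real.rpow_add two_pos]; congr 1; ring
      have hk1 : κ ^ α ≠ 0 := (Real.rpow_pos_of_pos hκ _).ne'
      have ht1 : t ^ α ≠ 0 := (Real.rpow_pos_of_pos htpos _).ne'
      have h2 : (2:ℝ) ^ ((j:ℝ) * (ℓ + s)) = x ^ α * κ ^ (-α) * t ^ (-α) := by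
        rw [hxα, Real.rpow_neg hκ.le, Real.rpow_neg htpos.le]
        field_simp
      have hkey : (2:ℝ) ^ ((j:ℝ) * (ℓ + s)) * Real.exp (-x) ≤ M * κ ^ (-α) * t ^ (-α) := by
        rw [h2]
        have hκα : (0:ℝ) < κ ^ (-α) := Real.rpow_pos_of_pos hκ _
        have htα : (0:ℝ) < t ^ (-α) := Real.rpow_pos_of_pos htpos _
        calc x ^ α * κ ^ (-α) * t ^ (-α) * Real.exp (-x)
            = (x ^ α * Real.exp (-x)) * (κ ^ (-α) * t ^ (-α)) := by ring
          _ ≤ M * (κ ^ (-α) * t ^ (-α)) :=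
            mul_le_mul_of_nonneg_right hE (by positivity)
          _ = M * κ ^ (-α) * t ^ (-α) := by ring
      have hc := hexp j t ht
      have hc0 := hnn j 0 le_rfl
      calc (2:ℝ) ^ ((j:ℝ) * ℓ) * c j t
          ≤ (2:ℝ) ^ ((j:ℝ) * ℓ) * (c j 0 * Real.exp (-x)) :=
            mul_le_mul_of_nonneg_left hc (Real.rpow_nonneg (by norm_num) _)
        _ = ((2:ℝ) ^ ((j:ℝ) * (-s)) * c j 0) * ((2:ℝ) ^ ((j:ℝ) * (ℓ + s)) * Real.exp (-x)) := by
            rw [hsplit]; ring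
        _ ≤ ((2:ℝ) ^ ((j:ℝ) * (-s)) * c j 0) * (M * κ ^ (-α) * t ^ (-α)) := by
            apply mul_le_mul_of_nonneg_left hkey
            exact mul_nonneg (Real.rpow_nonneg (by norm_num) _) hc0
    have hsum : (∑' j : ℤ, ENNReal.ofReal ((2 : ℝ) ^ ((j : ℝ) * ℓ) * c j t)) ≤
        S₁ * ENNReal.ofReal (M * κ ^ (-α) * t ^ (-α)) := by
      calc _ ≤ ∑' j : ℤ, ENNReal.ofReal
            (((2 : ℝ) ^ ((j : ℝ) * (-s)) * c j 0) * (M * κ ^ (-α) * t ^ (-α))) :=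
            ENNReal.tsum_le_tsum (fun j => ENNReal.ofReal_le_ofReal (hterm j))
        _ = ∑' j : ℤ, ENNReal.ofReal ((2 : ℝ) ^ ((j : ℝ) * (-s)) * c j 0) *
              ENNReal.ofReal (M * κ ^ (-α) * t ^ (-α)) := by
            refine tsum_congr (fun j => ?_)
            exact ENNReal.ofReal_mul (mul_nonneg (Real.rpow_nonneg (by norm_num) _)
              (hnn j 0 le_rfl))
        _ = S₁ * ENNReal.ofReal (M * κ ^ (-α) * t ^ (-α)) := ENNReal.tsum_mul_right
    have hS₁A : S₁ = ENNReal.ofReal A := (ENNReal.ofReal_toReal hS₁top).symm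
    rw [hS₁A, ← ENNReal.ofReal_mul hA] at hsum
    refine hsum.trans (ENNReal.ofReal_le_ofReal ?_)
    have hup : (1 + t) ^ α ≤ (2:ℝ) ^ α * t ^ α := by
      rw [← Real.mul_rpow (by norm_num) htpos.le]
      exact Real.rpow_le_rpow h1t.le (by linarith) hα
    have htα : t ^ (-α) ≤ (2:ℝ) ^ α * (1 + t) ^ (-α) := by
      rw [Real.rpow_neg htpos.le, Real.rpow_neg h1t.le]
      have hp1 : (0:ℝ) < t ^ α := Real.rpow_pos_of_pos htpos _
      have hp2 : (0:ℝ) < (1 + t) ^ α := Real.rpow_pos_of_pos h1t _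
      rw [inv_eq_one_div, inv_eq_one_div, mul_one_div, div_le_div_iff₀ hp1 hp2]
      linarith
    have hκα : (0:ℝ) < κ ^ (-α) := Real.rpow_pos_of_pos hκ _
    have hmax : (A * (M * κ ^ (-α))) * 2 ^ α ≤
        max ((A * (M * κ ^ (-α))) * 2 ^ α) ((A + B) * 2 ^ α) := le_max_left _ _
    have h0 : 0 ≤ A * (M * κ ^ (-α)) := by positivity
    calc A * (M * κ ^ (-α) * t ^ (-α)) = (A * (M * κ ^ (-α))) * t ^ (-α) := by ring
      _ ≤ (A * (M * κ ^ (-α))) * ((2:ℝ) ^ α * (1 + t) ^ (-α)) :=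
          mul_le_mul_of_nonneg_left htα h0
      _ = ((A * (M * κ ^ (-α))) * 2 ^ α) * (1 + t) ^ (-α) := by ring
      _ ≤ max ((A * (M * κ ^ (-α))) * 2 ^ α) ((A + B) * 2 ^ α) * (1 + t) ^ (-α) :=
          mul_le_mul_of_nonneg_right hmax (Real.rpow_nonneg h1t.le _)
end

section
/- For any tempered distributions v, w on ℝ³ (modulo polynomials) for which all terms are defined, and any m ∈ {1,2,3}, the identity (v ∂_m(−Δ)^{−1}w + w ∂_m(−Δ)^{−1}v) = (−Δ){((−Δ)^{−1}v)(∂_m(−Δ)^{−1}w)} + 2∇·{((−Δ)^{−1}v)(∂_m∇(−Δ)^{−1}w)} + ∂_m{((−Δ)^{−1}v) w} holds. -/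
noncomputable section

/-- Partial derivative in the `m`-th coordinate direction on `ℝ³`. -/
def pd (m : Fin 3) (f : EuclideanSpace ℝ (Fin 3) → ℝ)
    (x : EuclideanSpace ℝ (Fin 3)) : ℝ :=
  fderiv ℝ f x (EuclideanSpace.single m 1)

/-- The Laplacian `Δf = ∑ᵢ ∂ᵢ∂ᵢ f` on `ℝ³`. -/
def lap (f : EuclideanSpace ℝ (Fin 3) → ℝ)
    (x : EuclideanSpace ℝ (Fin 3)) : ℝ :=
  ∑ i : Fin 3, pd i (pd i f) x

lemma pd_smooth {f : EuclideanSpace ℝ (Fin 3) → ℝ} (hf : ContDiff ℝ (⊤ : ℕ∞) f) (i : Fin 3) :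
    ContDiff ℝ (⊤ : ℕ∞) (pd i f) :=
  (hf.fderiv_right (by simp)).clm_apply contDiff_const

lemma pd_mul {f g : EuclideanSpace ℝ (Fin 3) → ℝ} (hf : ContDiff ℝ (⊤ : ℕ∞) f)
    (hg : ContDiff ℝ (⊤ : ℕ∞) g) (i : Fin 3) (x : EuclideanSpace ℝ (Fin 3)) :
    pd i (fun y => f y * g y) x = pd i f x * g x + f x * pd i g x := by
  unfold pd
  rw [fderiv_fun_mul (hf.differentiable (by simp)).differentiableAt
    (hg.differentiable (by simp)).differentiableAt]
  simp only [ContinuousLinearMap.add_apply, ContinuousLinearMap.smul_apply, smul_eq_mul]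
  ring

lemma pd_comm {f : EuclideanSpace ℝ (Fin 3) → ℝ} (hf : ContDiff ℝ (⊤ : ℕ∞) f) (i j : Fin 3)
    (x : EuclideanSpace ℝ (Fin 3)) :
    pd i (pd j f) x = pd j (pd i f) x := by
  have hsymm : IsSymmSndFDerivAt ℝ f x :=
    hf.contDiffAt.isSymmSndFDerivAt (by rw [minSmoothness_of_isRCLikeNormedField]; exact WithTop.coe_le_coe.mpr (le_top : (2 : ℕ∞) ≤ ⊤))
  have hd : DifferentiableAt ℝ (fderiv ℝ f) x :=
    ((hf.fderiv_right (m := (⊤ : ℕ∞)) (by simp)).differentiable (by simp)).differentiableAt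
  have key : ∀ u v : EuclideanSpace ℝ (Fin 3),
      fderiv ℝ (fun y => fderiv ℝ f y v) x u = fderiv ℝ (fderiv ℝ f) x u v := by
    intro u v
    rw [fderiv_clm_apply hd (differentiableAt_const v)]
    simp
  unfold pd
  rw [key, key, hsymm]

lemma pd_sum {f : Fin 3 → EuclideanSpace ℝ (Fin 3) → ℝ}
    (hf : ∀ i, ContDiff ℝ (⊤ : ℕ∞) (f i)) (m : Fin 3) (x : EuclideanSpace ℝ (Fin 3)) :
    pd m (fun y => ∑ i : Fin 3, f i y) x = ∑ i : Fin 3, pd m (f i) x := by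
  unfold pd
  rw [fderiv_fun_sum fun i _ => ((hf i).differentiable (by simp)).differentiableAt]
  simp

lemma pd_neg {f : EuclideanSpace ℝ (Fin 3) → ℝ} (i : Fin 3) (x : EuclideanSpace ℝ (Fin 3)) :
    pd i (fun y => -(f y)) x = -(pd i f x) := by
  unfold pd
  rw [fderiv_fun_neg]
  simp

/-- The structural identity
`v ∂_m(−Δ)⁻¹w + w ∂_m(−Δ)⁻¹v
  = (−Δ){((−Δ)⁻¹v)(∂_m(−Δ)⁻¹w)} + 2∇·{((−Δ)⁻¹v)(∂_m∇(−Δ)⁻¹w)} + ∂_m{((−Δ)⁻¹v) w}`,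
written with `a = (−Δ)⁻¹v`, `b = (−Δ)⁻¹w` (so `v = −Δa`, `w = −Δb`). -/
theorem stmt6 (a b : EuclideanSpace ℝ (Fin 3) → ℝ)
    (ha : ContDiff ℝ (⊤ : ℕ∞) a) (hb : ContDiff ℝ (⊤ : ℕ∞) b) (m : Fin 3)
    (x : EuclideanSpace ℝ (Fin 3)) :
    (-(lap a x)) * pd m b x + (-(lap b x)) * pd m a x =
      -(lap (fun y => a y * pd m b y) x)
        + 2 * ∑ i : Fin 3, pd i (fun y => a y * pd m (pd i b) y) x
        + pd m (fun y => a y * (-(lap b y))) x := by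
  have hpmb : ContDiff ℝ (⊤ : ℕ∞) (pd m b) := pd_smooth hb m
  -- first term: lap of product
  have h1 : lap (fun y => a y * pd m b y) x
      = ∑ i : Fin 3, (pd i (pd i a) x * pd m b x + 2 * (pd i a x * pd i (pd m b) x)
          + a x * pd i (pd i (pd m b)) x) := by
    unfold lap
    refine Finset.sum_congr rfl fun i _ => ?_
    have e1 : (fun y => pd i (fun z => a z * pd m b z) y)
        = fun y => pd i a y * pd m b y + a y * pd i (pd m b) y := by
      funext y; exact pd_mul ha hpmb i y
    rw [show pd i (pd i fun y => a y * pd m b y) x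
        = pd i (fun y => pd i a y * pd m b y + a y * pd i (pd m b) y) x from by rw [← e1]]
    have hpa : ContDiff ℝ (⊤ : ℕ∞) (pd i a) := pd_smooth ha i
    have hpib : ContDiff ℝ (⊤ : ℕ∞) (pd i (pd m b)) := pd_smooth hpmb i
    have hadd : pd i (fun y => pd i a y * pd m b y + a y * pd i (pd m b) y) x
        = pd i (fun y => pd i a y * pd m b y) x + pd i (fun y => a y * pd i (pd m b) y) x := by
      unfold pd
      rw [fderiv_fun_add]
      · simp
      · exact ((hpa.mul hpmb).differentiable (by simp)).differentiableAt
      · exact ((ha.mul hpib).differentiable (by simp)).differentiableAt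
    rw [hadd, pd_mul hpa hpmb i x, pd_mul ha hpib i x]
    ring
  -- second term
  have h2 : ∀ i : Fin 3, pd i (fun y => a y * pd m (pd i b) y) x
      = pd i a x * pd m (pd i b) x + a x * pd i (pd m (pd i b)) x := fun i =>
    pd_mul ha (pd_smooth (pd_smooth hb i) m) i x
  -- third term
  have h3 : pd m (fun y => a y * (-(lap b y))) x
      = pd m a x * (-(lap b x)) + a x * pd m (fun y => -(lap b y)) x := by
    have hlb : ContDiff ℝ (⊤ : ℕ∞) (fun y => -(lap b y)) := by
      have : ContDiff ℝ (⊤ : ℕ∞) (lap b) := by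
        unfold lap
        exact ContDiff.sum fun i _ => pd_smooth (pd_smooth hb i) i
      exact this.neg
    exact pd_mul ha hlb m x
  rw [h1, Finset.mul_sum, h3]
  -- express pd m (-(lap b)) as sum
  have hlapb : pd m (fun y => -(lap b y)) x = -(∑ i : Fin 3, pd m (pd i (pd i b)) x) := by
    have e : (fun y => -(lap b y)) = fun y => -(∑ i : Fin 3, pd i (pd i b) y) := rfl
    rw [e, pd_neg]
    congr 1
    exact pd_sum (fun i => pd_smooth (pd_smooth hb i) i) m x
  rw [hlapb]
  -- commute derivatives
  have hc1 : ∀ i : Fin 3, pd i (pd i (pd m b)) x = pd m (pd i (pd i b)) x := by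
    intro i
    have e : pd i (pd m b) = pd m (pd i b) := by
      funext y; exact pd_comm hb i m y
    rw [e]
    exact pd_comm (pd_smooth hb i) i m x
  have hc2 : ∀ i : Fin 3, pd i (pd m (pd i b)) x = pd m (pd i (pd i b)) x := fun i =>
    pd_comm (pd_smooth hb i) i m x
  have hc3 : ∀ i : Fin 3, pd i (pd m b) x = pd m (pd i b) x := fun i =>
    pd_comm hb i m x
  simp only [h2]
  unfold lap
  simp only [hc1, hc2, hc3]
  simp only [mul_add, Finset.sum_add_distrib, ← Finset.sum_mul, ← Finset.mul_sum]
  ring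

end
end
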